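/- Let (A, ρ) be a unital Banach algebra and δ an element of the bidual of ker ρ ⊆ A ⊗̂ A^{op}. Suppose c := sup_{‖a‖≤1} ‖a ·_ρ δ - δ ·_ρ a - a ⊗ 1 + 1 ⊗ a‖ is finite. Then for every R ∈ (ker ρ)**, ‖R ⋆_ρ δ - R‖ ≤ c‖R‖, where ⋆_ρ denotes the first Arens product on (A ⊗̂ A^{op})**. -/

import Mathlib

open NormedSpace Metric

noncomputable section

universe u v w

/-- The topological dual of a normed space, as `NormedSpace.Dual` was in the older Mathlib. -/
abbrev Dual (𝕜 : Type*) [NontriviallyNormedField 𝕜] (E : Type*) [SeminormedAddCommGroup E]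
    [NormedSpace 𝕜 E] : Type _ := E →L[𝕜] 𝕜

/-- The Banach-space transpose (adjoint) of a continuous linear map. -/
def dualTranspose {X : Type u} {Y : Type v} [NormedAddCommGroup X] [NormedSpace ℂ X]
    [NormedAddCommGroup Y] [NormedSpace ℂ Y] (f : X →L[ℂ] Y) :
    Dual ℂ Y →L[ℂ] Dual ℂ X :=
  (ContinuousLinearMap.compL ℂ X Y ℂ).flip f

/-- The bidual (double adjoint) map `f** : X** → Y**`. -/
def bidualMap {X : Type u} {Y : Type v} [NormedAddCommGroup X] [NormedSpace ℂ X]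
    [NormedAddCommGroup Y] [NormedSpace ℂ Y] (f : X →L[ℂ] Y) :
    Dual ℂ (Dual ℂ X) →L[ℂ] Dual ℂ (Dual ℂ Y) :=
  dualTranspose (dualTranspose f)

/-- `(T, p)` is (an isometric copy of) the projective tensor product `A ⊗̂ A`:
`p` is a contractive bilinear map with dense span satisfying the universal
property of the projective tensor norm. -/
structure IsProjTensorProduct (A : Type u) (T : Type v) [NormedAddCommGroup A]
    [NormedSpace ℂ A] [NormedAddCommGroup T] [NormedSpace ℂ T] [CompleteSpace T]
    (p : A →L[ℂ] A →L[ℂ] T) : Prop where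
  norm_tmul_le : ∀ a b : A, ‖p a b‖ ≤ ‖a‖ * ‖b‖
  dense_span : Dense (↑(Submodule.span ℂ (Set.range fun ab : A × A => p ab.1 ab.2)) : Set T)
  lift : ∀ {W : Type w} [NormedAddCommGroup W] [NormedSpace ℂ W] [CompleteSpace W]
      (f : A →L[ℂ] A →L[ℂ] W), ∃ g : T →L[ℂ] W, (∀ a b : A, g (p a b) = f a b) ∧ ‖g‖ ≤ ‖f‖

/-!
For `f ∈ (A ⊗̂ A)*` the first Arens product gives `(R₀ ⋆ δ) f = R₀ g` with `g s = δ (f ∘ m s)`.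
On elementary tensors `m (a ⊗ b) = R_b ∘ L_a`, so unfolding the defect
`D a = a ·ρ δ - δ ·ρ a - a ⊗ 1 + 1 ⊗ a` at `f ∘ R_b` splits `g = f + φ ∘ ρ + ξ`, where
`φ x = δ (f ∘ R_x) - f (1 ⊗ x)` and `ξ (a ⊗ b) = D a (f ∘ R_b)`. Since `R₀ ∈ ker ρ**` kills
`φ ∘ ρ`, we get `(R₀ ⋆ δ - R₀) f = R₀ ξ`, and the projective norm bounds `‖ξ‖ ≤ c ‖f‖`.
-/

open ContinuousLinearMap

namespace IsProjTensorProduct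

variable {A : Type u} {T : Type v} [NormedAddCommGroup A] [NormedSpace ℂ A]
  [NormedAddCommGroup T] [NormedSpace ℂ T] [CompleteSpace T] {p : A →L[ℂ] A →L[ℂ] T}

theorem hom_ext (hp : IsProjTensorProduct A T p) {W : Type w} [NormedAddCommGroup W]
    [NormedSpace ℂ W] {F G : T →L[ℂ] W} (h : ∀ a b : A, F (p a b) = G (p a b)) : F = G :=
  ContinuousLinearMap.ext_on hp.dense_span <| by
    rintro _ ⟨ab, rfl⟩
    exact h ab.1 ab.2

/- The universal property only reaches targets in universe `w`, so `ℂ` is lifted there. -/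
theorem exists_dual_lift (hp : IsProjTensorProduct.{u, v, w} A T p)
    (B : A →L[ℂ] A →L[ℂ] ℂ) :
    ∃ ξ : Dual ℂ T, (∀ a b : A, ξ (p a b) = B a b) ∧ ‖ξ‖ ≤ ‖B‖ := by
  let ι : ℂ →ₗᵢ[ℂ] ULift.{w} ℂ := (LinearIsometryEquiv.ulift ℂ ℂ).symm.toLinearIsometry
  let ι₂ : (A →L[ℂ] A →L[ℂ] ℂ) →ₗᵢ[ℂ] (A →L[ℂ] A →L[ℂ] ULift.{w} ℂ) :=
    ι.postcomp.postcomp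
  obtain ⟨g, hg, hgB⟩ := hp.lift (ι₂ B)
  refine ⟨(LinearIsometryEquiv.ulift ℂ ℂ).toLinearIsometry.toContinuousLinearMap.comp g,
    fun a b => ?_, ?_⟩
  · simp [hg, ι₂, ι, LinearIsometry.postcomp]
  · rwa [LinearIsometry.norm_toContinuousLinearMap_comp, ← ι₂.norm_map]

theorem norm_dual_le (hp : IsProjTensorProduct A T p) (ξ : Dual ℂ T) {C : ℝ}
    (hC : 0 ≤ C) (h : ∀ a b : A, ‖ξ (p a b)‖ ≤ C * ‖a‖ * ‖b‖) : ‖ξ‖ ≤ C := by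
  obtain ⟨η, hη, hηn⟩ := hp.exists_dual_lift ((compL ℂ A T ℂ ξ).comp p)
  obtain rfl : η = ξ := hp.hom_ext hη
  exact hηn.trans (opNorm_le_bound₂ _ hC h)

end IsProjTensorProduct

def bidualMapL (X : Type u) (Y : Type v) [NormedAddCommGroup X] [NormedSpace ℂ X]
    [NormedAddCommGroup Y] [NormedSpace ℂ Y] :
    (X →L[ℂ] Y) →L[ℂ] Dual ℂ (Dual ℂ X) →L[ℂ] Dual ℂ (Dual ℂ Y) :=
  (compL ℂ (Dual ℂ Y) (Dual ℂ X) ℂ).flip.comp (compL ℂ X Y ℂ).flip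

section Derivation

variable {A : Type u} {T : Type v} [NormedAddCommGroup A] [NormedSpace ℂ A]
  [NormedAddCommGroup T] [NormedSpace ℂ T] {p : A →L[ℂ] A →L[ℂ] T}
  {μ : A →L[ℂ] A →L[ℂ] A} {L R : A →L[ℂ] T →L[ℂ] T}

/-- The paper's `a ↦ a ·ρ δ - δ ·ρ a - a ⊗ 1 + 1 ⊗ a`, bundled as a continuous linear map. -/
def defect (p : A →L[ℂ] A →L[ℂ] T) (e : A) (L R : A →L[ℂ] T →L[ℂ] T)
    (δ : Dual ℂ (Dual ℂ T)) : A →L[ℂ] Dual ℂ (Dual ℂ T) :=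
  (bidualMapL T T ∘L L).flip δ - (bidualMapL T T ∘L R).flip δ
    - inclusionInDoubleDual ℂ T ∘L p.flip e + inclusionInDoubleDual ℂ T ∘L p e

theorem defect_apply_apply (e a : A) (δ : Dual ℂ (Dual ℂ T)) (h : Dual ℂ T) :
    defect p e L R δ a h = δ (h ∘L L a) - δ (h ∘L R a) - h (p a e) + h (p e a) :=
  rfl

theorem norm_defect_le {e : A} {δ : Dual ℂ (Dual ℂ T)} {c : ℝ}
    (hc : ∀ a : A, ‖a‖ ≤ 1 → ‖defect p e L R δ a‖ ≤ c) (a : A) :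
    ‖defect p e L R δ a‖ ≤ c * ‖a‖ := by
  have hc0 : 0 ≤ c := (norm_nonneg _).trans (hc 0 (by simp))
  exact le_of_opNorm_le _ (opNorm_le_of_unit_norm hc0 fun x hx => hc x hx.le) a

theorem rightAction_comp_rightAction [CompleteSpace T] (hp : IsProjTensorProduct A T p)
    (hμa : ∀ a b c : A, μ (μ a b) c = μ a (μ b c)) (hR : ∀ a b c : A, R a (p b c) = p b (μ c a))
    (a b : A) : R b ∘L R a = R (μ a b) :=
  hp.hom_ext fun x y => by simp only [comp_apply, hR, hμa]

theorem mul_tmul_eq [CompleteSpace T] (hp : IsProjTensorProduct A T p) {m : T →L[ℂ] T →L[ℂ] T}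
    (hm : ∀ a b c d : A, m (p a b) (p c d) = p (μ a c) (μ d b))
    (hL : ∀ a b c : A, L a (p b c) = p (μ a b) c) (hR : ∀ a b c : A, R a (p b c) = p b (μ c a))
    (a b : A) : m (p a b) = R b ∘L L a :=
  hp.hom_ext fun x y => by simp only [hm, comp_apply, hL, hR]

theorem norm_comp_rightAction_le [CompleteSpace T] (hp : IsProjTensorProduct A T p)
    (hμn : ∀ a b : A, ‖μ a b‖ ≤ ‖a‖ * ‖b‖) (hR : ∀ a b c : A, R a (p b c) = p b (μ c a))
    (f : Dual ℂ T) (b : A) : ‖f ∘L R b‖ ≤ ‖f‖ * ‖b‖ :=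
  hp.norm_dual_le _ (by positivity) fun x y => by
    rw [comp_apply, hR]
    calc ‖f (p x (μ y b))‖ ≤ ‖f‖ * (‖x‖ * (‖y‖ * ‖b‖)) := by
          grw [le_opNorm, hp.norm_tmul_le, hμn]
      _ = ‖f‖ * ‖b‖ * ‖x‖ * ‖y‖ := by ring

end Derivation

section Arens

variable {A : Type u} {T : Type v} [NormedAddCommGroup A] [NormedSpace ℂ A]
  [NormedAddCommGroup T] [NormedSpace ℂ T] [CompleteSpace T] {p : A →L[ℂ] A →L[ℂ] T}
  {μ : A →L[ℂ] A →L[ℂ] A} {e : A} {m : T →L[ℂ] T →L[ℂ] T} {L R : A →L[ℂ] T →L[ℂ] T}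

theorem apply_comp_mul_tmul (hp : IsProjTensorProduct A T p)
    (hμa : ∀ a b c : A, μ (μ a b) c = μ a (μ b c)) (he : ∀ a : A, μ e a = a)
    (hm : ∀ a b c d : A, m (p a b) (p c d) = p (μ a c) (μ d b))
    (hL : ∀ a b c : A, L a (p b c) = p (μ a b) c) (hR : ∀ a b c : A, R a (p b c) = p b (μ c a))
    (δ : Dual ℂ (Dual ℂ T)) (f : Dual ℂ T) (a b : A) :
    δ (f ∘L m (p a b)) =
      f (p a b) + (δ (f ∘L R (μ a b)) - f (p e (μ a b))) + defect p e L R δ a (f ∘L R b) := by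
  rw [defect_apply_apply, mul_tmul_eq hp hm hL hR, ← rightAction_comp_rightAction hp hμa hR]
  simp only [comp_apply, comp_assoc, hR, he]
  ring

theorem exists_arens_decomposition (hp : IsProjTensorProduct A T p)
    (hμa : ∀ a b c : A, μ (μ a b) c = μ a (μ b c)) (hμn : ∀ a b : A, ‖μ a b‖ ≤ ‖a‖ * ‖b‖)
    (he : ∀ a : A, μ e a = a) {ρh : T →L[ℂ] A} (hρh : ∀ a b : A, ρh (p a b) = μ a b)
    (hm : ∀ a b c d : A, m (p a b) (p c d) = p (μ a c) (μ d b))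
    (hL : ∀ a b c : A, L a (p b c) = p (μ a b) c) (hR : ∀ a b c : A, R a (p b c) = p b (μ c a))
    {δ : Dual ℂ (Dual ℂ T)} {c : ℝ} (hc : ∀ a : A, ‖a‖ ≤ 1 → ‖defect p e L R δ a‖ ≤ c)
    (f : Dual ℂ T) :
    ∃ (φ : Dual ℂ A) (ξ : Dual ℂ T),
      δ ∘L compL ℂ T T ℂ f ∘L m = f + φ ∘L ρh + ξ ∧ ‖ξ‖ ≤ c * ‖f‖ := by
  set φ : Dual ℂ A := δ ∘L compL ℂ T T ℂ f ∘L R - f ∘L p e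
  set ξ : Dual ℂ T := δ ∘L compL ℂ T T ℂ f ∘L m - f - φ ∘L ρh
  have hξ (a b : A) : ξ (p a b) = defect p e L R δ a (f ∘L R b) := by
    have := apply_comp_mul_tmul hp hμa he hm hL hR δ f a b
    simp only [ξ, φ, sub_apply, comp_apply, compL_apply, hρh] at this ⊢
    linear_combination this
  have hc0 : 0 ≤ c := (norm_nonneg _).trans (hc 0 (by simp))
  refine ⟨φ, ξ, by simp only [ξ]; abel, hp.norm_dual_le ξ (by positivity) fun a b => ?_⟩
  calc ‖ξ (p a b)‖ ≤ c * ‖a‖ * (‖f‖ * ‖b‖) := by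
        grw [hξ, le_opNorm, norm_defect_le hc, norm_comp_rightAction_le hp hμn hR]
    _ = c * ‖f‖ * ‖a‖ * ‖b‖ := by ring

end Arens

theorem stmt13_general {A : Type u} [NormedAddCommGroup A] [NormedSpace ℂ A]
    {T : Type v} [NormedAddCommGroup T] [NormedSpace ℂ T] [CompleteSpace T]
    (p : A →L[ℂ] A →L[ℂ] T) (hp : IsProjTensorProduct A T p)
    (μ : A →L[ℂ] A →L[ℂ] A)
    (hμa : ∀ a b c : A, μ (μ a b) c = μ a (μ b c))
    (hμn : ∀ a b : A, ‖μ a b‖ ≤ ‖a‖ * ‖b‖)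
    (e : A) (he : ∀ a : A, μ e a = a ∧ μ a e = a)
    (ρh : T →L[ℂ] A) (hρh : ∀ a b : A, ρh (p a b) = μ a b)
    -- the multiplication of `A ⊗̂ Aᵒᵖ`
    (m : T →L[ℂ] T →L[ℂ] T)
    (hm : ∀ a b c d : A, m (p a b) (p c d) = p (μ a c) (μ d b))
    -- `star` is the first Arens product on `(A ⊗̂ Aᵒᵖ)**`
    (star : Dual ℂ (Dual ℂ T) →L[ℂ] Dual ℂ (Dual ℂ T) →L[ℂ] Dual ℂ (Dual ℂ T))
    (hstar : ∀ (F G : Dual ℂ (Dual ℂ T)) (f g : Dual ℂ T),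
      (∀ s : T, g s = G (dualTranspose (m s) f)) → star F G f = F g)
    -- the canonical bimodule actions of `A` on `A ⊗̂ A`
    (L R : A →L[ℂ] T →L[ℂ] T)
    (hL : ∀ a b c : A, L a (p b c) = p (μ a b) c)
    (hR : ∀ a b c : A, R a (p b c) = p b (μ c a))
    (δ : Dual ℂ (Dual ℂ T))
    (c : ℝ)
    (hc : ∀ a : A, ‖a‖ ≤ 1 →
      ‖bidualMap (L a) δ - bidualMap (R a) δ -
        inclusionInDoubleDual ℂ T (p a e) + inclusionInDoubleDual ℂ T (p e a)‖ ≤ c) :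
    ∀ R₀ : Dual ℂ (Dual ℂ T), bidualMap ρh R₀ = 0 → ‖star R₀ δ - R₀‖ ≤ c * ‖R₀‖ := by
  intro R₀ hR₀
  have hc0 : 0 ≤ c := (norm_nonneg _).trans (hc 0 (by simp))
  refine opNorm_le_bound _ (by positivity) fun f => ?_
  obtain ⟨φ, ξ, hdecomp, hξ⟩ := exists_arens_decomposition hp hμa hμn (fun a => (he a).1) hρh
    hm hL hR hc f
  have hφ : R₀ (φ ∘L ρh) = 0 := congrArg (· φ) hR₀
  have hstar_f : star R₀ δ f = R₀ f + R₀ ξ := by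
    rw [hstar R₀ δ f (δ ∘L compL ℂ T T ℂ f ∘L m) fun s => rfl, hdecomp, map_add, map_add, hφ,
      add_zero]
  calc ‖(star R₀ δ - R₀) f‖ = ‖R₀ ξ‖ := by rw [sub_apply, hstar_f, add_sub_cancel_left]
    _ ≤ ‖R₀‖ * (c * ‖f‖) := by grw [le_opNorm, hξ]
    _ = c * ‖R₀‖ * ‖f‖ := by ring

theorem stmt13 {A : Type u} [NormedAddCommGroup A] [NormedSpace ℂ A] [CompleteSpace A]
    {T : Type v} [NormedAddCommGroup T] [NormedSpace ℂ T] [CompleteSpace T]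
    (p : A →L[ℂ] A →L[ℂ] T) (hp : IsProjTensorProduct A T p)
    (μ : A →L[ℂ] A →L[ℂ] A)
    (hμa : ∀ a b c : A, μ (μ a b) c = μ a (μ b c))
    (hμn : ∀ a b : A, ‖μ a b‖ ≤ ‖a‖ * ‖b‖)
    (e : A) (he : ∀ a : A, μ e a = a ∧ μ a e = a)
    (ρh : T →L[ℂ] A) (hρh : ∀ a b : A, ρh (p a b) = μ a b)
    -- the multiplication of `A ⊗̂ Aᵒᵖ`
    (m : T →L[ℂ] T →L[ℂ] T)
    (hm : ∀ a b c d : A, m (p a b) (p c d) = p (μ a c) (μ d b))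
    -- `star` is the first Arens product on `(A ⊗̂ Aᵒᵖ)**`
    (star : Dual ℂ (Dual ℂ T) →L[ℂ] Dual ℂ (Dual ℂ T) →L[ℂ] Dual ℂ (Dual ℂ T))
    (hstar : ∀ (F G : Dual ℂ (Dual ℂ T)) (f g : Dual ℂ T),
      (∀ s : T, g s = G (dualTranspose (m s) f)) → star F G f = F g)
    -- the canonical bimodule actions of `A` on `A ⊗̂ A`
    (L R : A →L[ℂ] T →L[ℂ] T)
    (hL : ∀ a b c : A, L a (p b c) = p (μ a b) c)
    (hR : ∀ a b c : A, R a (p b c) = p b (μ c a))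
    (δ : Dual ℂ (Dual ℂ T)) (hδ : bidualMap ρh δ = 0)
    (c : ℝ)
    (hc : ∀ a : A, ‖a‖ ≤ 1 →
      ‖bidualMap (L a) δ - bidualMap (R a) δ -
        inclusionInDoubleDual ℂ T (p a e) + inclusionInDoubleDual ℂ T (p e a)‖ ≤ c) :
    ∀ R₀ : Dual ℂ (Dual ℂ T), bidualMap ρh R₀ = 0 → ‖star R₀ δ - R₀‖ ≤ c * ‖R₀‖ :=
  stmt13_general p hp μ hμa hμn e he ρh hρh m hm star hstar L R hL hR δ c hc
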